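/- Suppose 0 < ε < p < 1/2, so that K > J > 0. Then for every y ∈ {−1,1}^{ℤ₊}, every n ∈ ℤ₊ and every i ≤ n, the field w_i^{(n)}(y) lies in the set [−K−J, −K+J] ∪ [K−J, K+J]; in particular |w_i^{(n)}(y)| ≥ K − J > 0. -/
import Mathlib


/-- Suppose `0 < ε < p < 1/2`, so that `K > J > 0`. Then for every
`y ∈ {−1,1}^{ℤ₊}`, every `n ∈ ℤ₊` and every `i ≤ n`, the field `w_i^{(n)}(y)` lies in
`[−K−J, −K+J] ∪ [K−J, K+J]`; in particular `|w_i^{(n)}(y)| ≥ K − J > 0`. -/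
theorem stmt_7 (p ε : ℝ) (hε0 : 0 < ε) (hεp : ε < p) (hp : p < 1 / 2)
    (J K : ℝ)
    (hJ : J = (1 / 2) * Real.log ((1 - p) / p))
    (hK : K = (1 / 2) * Real.log ((1 - ε) / ε))
    (A : ℝ → ℝ)
    (hA : ∀ u, A u = (1 / 2) * Real.log (Real.cosh (u + J) / Real.cosh (u - J)))
    (y : ℕ → ℝ) (hy : ∀ i, y i = 1 ∨ y i = -1)
    (n : ℕ) (w : ℕ → ℝ)
    (hw0 : ∀ i : ℕ, n < i → w i = 0)
    (hwrec : ∀ i : ℕ, i ≤ n → w i = K * y i + A (w (i + 1))) :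
    (0 < J ∧ J < K) ∧
    ∀ i : ℕ, i ≤ n →
      (w i ∈ Set.Icc (-K - J) (-K + J) ∪ Set.Icc (K - J) (K + J)) ∧
      K - J ≤ |w i| ∧ 0 < K - J := by

  have hp0 : 0 < p := hε0.trans hεp
  have hJpos : 0 < J := by
    rw [hJ]
    have h1 : 1 < (1 - p) / p := (one_lt_div hp0).mpr (by linarith)
    have := Real.log_pos h1
    linarith
  have hJK : J < K := by
    rw [hJ, hK]
    have h1 : (1 - p) / p < (1 - ε) / ε := by
      rw [div_lt_div_iff₀ hp0 hε0]; nlinarith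
    have h2 : 0 < (1 - p) / p := by
      apply div_pos <;> linarith
    have := Real.log_lt_log h2 h1
    linarith
  have key : ∀ v, Real.cosh (v + 2 * J) ≤ Real.exp (2 * J) * Real.cosh v := by
    intro v
    rw [Real.cosh_add, ← Real.cosh_add_sinh]
    have h1 : Real.sinh v ≤ Real.cosh v := by
      have := Real.cosh_sub_sinh v
      have := Real.exp_pos (-v)
      linarith
    have h2 : 0 < Real.sinh (2 * J) := Real.sinh_pos_iff.mpr (by linarith)
    nlinarith [Real.cosh_pos v]
  have hAb : ∀ u, -J ≤ A u ∧ A u ≤ J := by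
    intro u
    have hc1 := Real.cosh_pos (u + J)
    have hc2 := Real.cosh_pos (u - J)
    have hub : Real.cosh (u + J) ≤ Real.exp (2 * J) * Real.cosh (u - J) := by
      have := key (u - J)
      have he : u - J + 2 * J = u + J := by ring
      rwa [he] at this
    have hlb : Real.cosh (u - J) ≤ Real.exp (2 * J) * Real.cosh (u + J) := by
      have := key (-u - J)
      have he : -u - J + 2 * J = -(u - J) := by ring
      have he2 : -u - J = -(u + J) := by ring
      rwa [he, he2, Real.cosh_neg, Real.cosh_neg] at this
    rw [hA]
    have hr : 0 < Real.cosh (u + J) / Real.cosh (u - J) := div_pos hc1 hc2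
    constructor
    · have : Real.exp (-(2 * J)) ≤ Real.cosh (u + J) / Real.cosh (u - J) := by
        rw [le_div_iff₀ hc2, Real.exp_neg]
        rw [inv_mul_le_iff₀ (Real.exp_pos _)] at *
        linarith
      have := (Real.le_log_iff_exp_le hr).mpr this
      linarith
    · have : Real.cosh (u + J) / Real.cosh (u - J) ≤ Real.exp (2 * J) := by
        rw [div_le_iff₀ hc2]; exact hub
      have := (Real.log_le_iff_le_exp hr).mpr this
      linarith
  refine ⟨⟨hJpos, hJK⟩, ?_⟩
  intro i hi
  have hrec := hwrec i hi
  have hab := hAb (w (i + 1))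
  have hmem : w i ∈ Set.Icc (-K - J) (-K + J) ∪ Set.Icc (K - J) (K + J) := by
    rcases hy i with h | h <;> rw [h] at hrec
    · right; constructor <;> simp [hrec] <;> linarith [hab.1, hab.2]
    · left; constructor <;> simp [hrec] <;> linarith [hab.1, hab.2]
  refine ⟨hmem, ?_, by linarith⟩
  rcases hmem with h | h
  · have : w i ≤ -(K - J) := by have := h.2; linarith
    calc K - J ≤ -(w i) := by linarith
    _ ≤ |w i| := neg_le_abs _
  · exact h.1.trans (le_abs_self _)
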